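/- Given a double bracket {{−,−}} on an algebra R (of degree 0), the induced bracket {a,b} := μ({{a,b}}) (multiplication applied to the double bracket) descends to a well-defined skew-symmetric bracket on the commutator quotient R♮ = R/[R,R]; if moreover the double Jacobi identity holds, this bracket makes R♮ a Lie algebra. -/

import Mathlib

open TensorProduct

namespace Stmt5

variable (k R : Type*) [Field k] [Ring R] [Algebra k R]

/-- The cyclic permutation `σ₍₁₂₃₎ : b₁ ⊗ b₂ ⊗ b₃ ↦ b₃ ⊗ b₁ ⊗ b₂` on `R ⊗ R ⊗ R`. -/
noncomputable def cyc : R ⊗[k] (R ⊗[k] R) →ₗ[k] R ⊗[k] (R ⊗[k] R) :=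
  (TensorProduct.comm k (R ⊗[k] R) R).toLinearMap.comp
    (TensorProduct.assoc k R R R).symm.toLinearMap

/-- The left extension `{{a, b₁ ⊗ b₂}}_L = {{a, b₁}} ⊗ b₂` of a double bracket. -/
noncomputable def leftExt (B : R →ₗ[k] R →ₗ[k] R ⊗[k] R) (a : R) :
    R ⊗[k] R →ₗ[k] R ⊗[k] (R ⊗[k] R) :=
  (TensorProduct.assoc k R R R).toLinearMap.comp (LinearMap.rTensor R (B a))

/-- The induced bracket `{a, b} := μ ∘ {{a, b}}`. -/
noncomputable def br (B : R →ₗ[k] R →ₗ[k] R ⊗[k] R) (a b : R) : R :=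
  LinearMap.mul' k R (B a b)

/-- The span of commutators, so that `R♮ = R / [R, R]`. -/
def commSpace : Submodule k R :=
  Submodule.span k {z : R | ∃ x y : R, z = x * y - y * x}

/-!
Write `π : R → R♮` for the quotient map. Since `π (x * y) = π (y * x)`, after composing with `π`
the multiplication `μ : R ⊗ R → R` is invariant under the flip and `μ₃ : R ⊗ R ⊗ R → R` under
the cyclic permutation. The derivation rule then shows that `{a, -}` maps commutators to
commutators, and skew-symmetry transports this to the first slot and gives
`π {a, b} = -π {b, a}`. For the Jacobi identity, modulo commutators
`{a, {b, c}} = μ₃ {{a, {{b, c}}}}_L - μ₃ {{a, {{c, b}}}}_L`, so the Jacobiator is the difference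
of the images under `π ∘ μ₃` of the double Jacobi sums for `(a, b, c)` and `(a, c, b)`, and
each vanishes by cyclic invariance.
-/

section Multiplication

variable {k R : Type*} [CommSemiring k] [Semiring R] [Algebra k R]

theorem mul'_tmul_one_mul (u : R) (t : R ⊗[k] R) :
    LinearMap.mul' k R ((u ⊗ₜ[k] (1 : R)) * t) = u * LinearMap.mul' k R t := by
  induction t using TensorProduct.induction_on with
  | zero => simp
  | tmul p q => simp [Algebra.TensorProduct.tmul_mul_tmul, mul_assoc]
  | add s t hs ht => simp [mul_add, hs, ht]

theorem mul'_mul_one_tmul (v : R) (t : R ⊗[k] R) :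
    LinearMap.mul' k R (t * ((1 : R) ⊗ₜ[k] v)) = LinearMap.mul' k R t * v := by
  induction t using TensorProduct.induction_on with
  | zero => simp
  | tmul p q => simp [Algebra.TensorProduct.tmul_mul_tmul, mul_assoc]
  | add s t hs ht => simp [add_mul, hs, ht]

variable (k R) in
noncomputable def mul₃ : R ⊗[k] (R ⊗[k] R) →ₗ[k] R :=
  LinearMap.mul' k R ∘ₗ (LinearMap.mul' k R).lTensor R

@[simp] theorem mul₃_tmul (x y z : R) : mul₃ k R (x ⊗ₜ (y ⊗ₜ z)) = x * (y * z) := by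
  simp [mul₃]

theorem mul₃_comp_assoc :
    mul₃ k R ∘ₗ (TensorProduct.assoc k R R R).toLinearMap =
      LinearMap.mul' k R ∘ₗ (LinearMap.mul' k R).rTensor R :=
  TensorProduct.ext_threefold fun x y z => by simp [mul_assoc]

end Multiplication

section DoubleBracket

variable {k R}

def IsDerivationInSnd (B : R →ₗ[k] R →ₗ[k] R ⊗[k] R) : Prop :=
  ∀ a x y : R, B a (x * y) = (x ⊗ₜ[k] (1 : R)) * B a y + B a x * ((1 : R) ⊗ₜ[k] y)

def IsCyclicSkew (B : R →ₗ[k] R →ₗ[k] R ⊗[k] R) : Prop :=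
  ∀ a b : R, B a b = -TensorProduct.comm k R R (B b a)

def DoubleJacobi (B : R →ₗ[k] R →ₗ[k] R ⊗[k] R) : Prop :=
  ∀ a b c : R, leftExt k R B a (B b c) + cyc k R (leftExt k R B b (B c a))
    + cyc k R (cyc k R (leftExt k R B c (B a b))) = 0

@[simp] theorem cyc_tmul (x y z : R) :
    cyc k R (x ⊗ₜ[k] (y ⊗ₜ[k] z)) = z ⊗ₜ[k] (x ⊗ₜ[k] y) := by
  simp [cyc]

theorem mul₃_leftExt_tmul (B : R →ₗ[k] R →ₗ[k] R ⊗[k] R) (a u v : R) :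
    mul₃ k R (leftExt k R B a (u ⊗ₜ v)) = br k R B a u * v := by
  simpa [leftExt, br] using LinearMap.congr_fun mul₃_comp_assoc (B a u ⊗ₜ[k] v)

theorem br_mul {B : R →ₗ[k] R →ₗ[k] R ⊗[k] R} (hder : IsDerivationInSnd B) (a x y : R) :
    br k R B a (x * y) = x * br k R B a y + br k R B a x * y := by
  rw [br, hder, map_add, mul'_tmul_one_mul, mul'_mul_one_tmul, br, br]

local notation "π" => Submodule.mkQ (commSpace k R)

theorem mem_commSpace_iff {x : R} : x ∈ commSpace k R ↔ π x = 0 := by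
  rw [← LinearMap.mem_ker, Submodule.ker_mkQ]

theorem mkQ_mul_comm (x y : R) : π (x * y) = π (y * x) := by
  rw [← sub_eq_zero, ← map_sub, ← mem_commSpace_iff]
  exact Submodule.subset_span ⟨x, y, rfl⟩

theorem mkQ_mul'_comm (t : R ⊗[k] R) :
    π (LinearMap.mul' k R (TensorProduct.comm k R R t)) = π (LinearMap.mul' k R t) := by
  induction t using TensorProduct.induction_on with
  | zero => simp
  | tmul x y => simp [mkQ_mul_comm y]
  | add s t hs ht => simp only [map_add, hs, ht]

theorem mkQ_mul₃_cyc (t : R ⊗[k] (R ⊗[k] R)) : π (mul₃ k R (cyc k R t)) = π (mul₃ k R t) :=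
  LinearMap.congr_fun (f := π ∘ₗ mul₃ k R ∘ₗ cyc k R) (g := π ∘ₗ mul₃ k R)
    (TensorProduct.ext_threefold' fun x y z => by
      simp only [LinearMap.comp_apply, cyc_tmul, mul₃_tmul, ← mul_assoc]
      rw [mul_assoc, mkQ_mul_comm z]) t

variable {B : R →ₗ[k] R →ₗ[k] R ⊗[k] R}

theorem mkQ_br_mul_comm (hder : IsDerivationInSnd B) (a x y : R) :
    π (br k R B a (x * y)) = π (br k R B a (y * x)) := by
  rw [br_mul hder, br_mul hder, map_add, map_add, mkQ_mul_comm x, mkQ_mul_comm _ y, add_comm]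

theorem br_mem_commSpace_of_right_mem (hder : IsDerivationInSnd B) (a : R) {c : R}
    (hc : c ∈ commSpace k R) : br k R B a c ∈ commSpace k R := by
  have hle : commSpace k R ≤ (commSpace k R).comap (LinearMap.mul' k R ∘ₗ B a) := by
    refine Submodule.span_le.2 ?_
    rintro _ ⟨x, y, rfl⟩
    rw [SetLike.mem_coe, Submodule.mem_comap, mem_commSpace_iff, map_sub, map_sub]
    exact sub_eq_zero.2 (mkQ_br_mul_comm hder a x y)
  exact hle hc

theorem mkQ_br_swap (hskew : IsCyclicSkew B) (a b : R) :
    π (br k R B a b) = -π (br k R B b a) := by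
  rw [br, hskew, map_neg, map_neg, mkQ_mul'_comm, br]

theorem br_mem_commSpace_of_left_mem (hder : IsDerivationInSnd B) (hskew : IsCyclicSkew B)
    (b : R) {c : R} (hc : c ∈ commSpace k R) : br k R B c b ∈ commSpace k R := by
  rw [mem_commSpace_iff, mkQ_br_swap hskew, neg_eq_zero, ← mem_commSpace_iff]
  exact br_mem_commSpace_of_right_mem hder b hc

theorem mkQ_br_mul' (hder : IsDerivationInSnd B) (a : R) (t : R ⊗[k] R) :
    π (br k R B a (LinearMap.mul' k R t)) =
      π (mul₃ k R (leftExt k R B a (TensorProduct.comm k R R t)))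
        + π (mul₃ k R (leftExt k R B a t)) := by
  induction t using TensorProduct.induction_on with
  | zero => simp [br]
  | tmul u v =>
    rw [TensorProduct.comm_tmul, mul₃_leftExt_tmul, mul₃_leftExt_tmul, LinearMap.mul'_apply,
      br_mul hder, map_add, mkQ_mul_comm u]
  | add s t hs ht =>
    simp only [map_add, br] at hs ht ⊢
    rw [hs, ht]
    abel

theorem mkQ_br_br (hder : IsDerivationInSnd B) (hskew : IsCyclicSkew B) (a b c : R) :
    π (br k R B a (br k R B b c)) =
      π (mul₃ k R (leftExt k R B a (B b c))) - π (mul₃ k R (leftExt k R B a (B c b))) := by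
  have hcomm : TensorProduct.comm k R R (B b c) = -B c b := by rw [hskew c b, neg_neg]
  rw [show br k R B b c = LinearMap.mul' k R (B b c) from rfl, mkQ_br_mul' hder, hcomm,
    map_neg, map_neg, map_neg, neg_add_eq_sub]

theorem mkQ_mul₃_leftExt_cyclic (hJ : DoubleJacobi B) (a b c : R) :
    π (mul₃ k R (leftExt k R B a (B b c))) + π (mul₃ k R (leftExt k R B b (B c a)))
      + π (mul₃ k R (leftExt k R B c (B a b))) = 0 := by
  simpa only [LinearMap.comp_apply, map_add, map_zero, mkQ_mul₃_cyc] using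
    congrArg (π ∘ₗ mul₃ k R) (hJ a b c)

end DoubleBracket

/-- Given a double bracket `{{-,-}}` on an algebra `R` (degree `0`), the
induced bracket `{a, b} := μ({{a, b}})` descends to a well-defined skew-symmetric bracket on
the commutator quotient `R♮ = R/[R,R]`; if moreover the double Jacobi identity holds, this
bracket satisfies the Jacobi identity modulo commutators, i.e. makes `R♮` a Lie algebra. -/
theorem stmt5 (B : R →ₗ[k] R →ₗ[k] R ⊗[k] R)
    (hder : ∀ a x y : R,
      B a (x * y) = (x ⊗ₜ[k] (1 : R)) * B a y + B a x * ((1 : R) ⊗ₜ[k] y))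
    (hskew : ∀ a b : R, B a b = - (TensorProduct.comm k R R) (B b a)) :
    (∀ a a' b b' : R, a - a' ∈ commSpace k R → b - b' ∈ commSpace k R →
        br k R B a b - br k R B a' b' ∈ commSpace k R) ∧
    (∀ a b : R, br k R B a b + br k R B b a ∈ commSpace k R) ∧
    ((∀ a b c : R,
        leftExt k R B a (B b c)
          + cyc k R (leftExt k R B b (B c a))
          + cyc k R (cyc k R (leftExt k R B c (B a b))) = 0) →
      ∀ a b c : R,
        br k R B a (br k R B b c) + br k R B b (br k R B c a)
          + br k R B c (br k R B a b) ∈ commSpace k R) := by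
  refine ⟨fun a a' b b' ha hb => ?_, fun a b => ?_, fun hJ a b c => ?_⟩
  · have hsplit : br k R B a b - br k R B a' b' = br k R B (a - a') b + br k R B a' (b - b') := by
      simp only [br, map_sub, LinearMap.sub_apply]
      abel
    rw [hsplit]
    exact add_mem (br_mem_commSpace_of_left_mem hder hskew b ha)
      (br_mem_commSpace_of_right_mem hder a' hb)
  · rw [mem_commSpace_iff, map_add, mkQ_br_swap hskew a b, neg_add_cancel]
  · have habc := mkQ_mul₃_leftExt_cyclic hJ a b c
    have hacb := mkQ_mul₃_leftExt_cyclic hJ a c b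
    rw [mem_commSpace_iff, map_add, map_add, mkQ_br_br hder hskew a b c,
      mkQ_br_br hder hskew b c a, mkQ_br_br hder hskew c a b]
    linear_combination (norm := abel) habc - hacb

end Stmt5
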